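/- Coercivity of the damped linear energy: there exist constants 𝔠₁ > 0 and c > 0 such that for all smooth θ, v on [-1,1] with ∫ h_s v dξ = ∫ h_s θ dξ = 0, the quantity E := (1/2)∫ h_s v² + ∫(2|h_s'|² - 4h_s h_s'' + h_s²)|θ'|² + ∫ h_s² |θ''|² + 𝔠₁∫ h_s |θ'|² + 𝔠₁∫ h_s v θ (all integrals over (-1,1)) satisfies E ≥ c ( ‖h_s^{1/2} v‖²_{L²} + ‖θ'‖²_{L²} + ‖h_s θ''‖²_{L²} + ‖h_s^{1/2} θ'‖²_{L²} ). -/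

import Mathlib

noncomputable def hs : ℝ → ℝ := fun x =>
  (Real.exp 1 ^ 2 + 1) / (Real.exp 1 ^ 2 - 1) -
    (Real.exp (x + 1) + Real.exp (1 - x)) / (Real.exp 1 ^ 2 - 1)

open Real Set intervalIntegral MeasureTheory

lemma Epos : (0:ℝ) < Real.exp 1 ^ 2 - 1 := by
  nlinarith [Real.exp_one_gt_d9]

lemma hs_exp_mul (x : ℝ) : Real.exp (x+1) * Real.exp (1-x) = Real.exp 1 ^ 2 := by
  rw [← Real.exp_add, sq, ← Real.exp_add]; ring_nf

lemma hasDerivAt_hs (x : ℝ) :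
    HasDerivAt hs (-(Real.exp (x+1) - Real.exp (1-x)) / (Real.exp 1 ^ 2 - 1)) x := by
  have h1 : HasDerivAt (fun x : ℝ => Real.exp (x+1)) (Real.exp (x+1)) x := by
    simpa using ((hasDerivAt_id x).add_const 1).exp
  have h2 : HasDerivAt (fun x : ℝ => Real.exp (1-x)) (-Real.exp (1-x)) x := by
    simpa using ((hasDerivAt_id x).const_sub 1).exp
  have := (((h1.add h2).div_const (Real.exp 1 ^ 2 - 1)).const_sub
    ((Real.exp 1 ^ 2 + 1) / (Real.exp 1 ^ 2 - 1)))
  exact this.congr_deriv (by ring)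

lemma deriv_hs : deriv hs = fun x => -(Real.exp (x+1) - Real.exp (1-x)) / (Real.exp 1 ^ 2 - 1) := by
  funext x; exact (hasDerivAt_hs x).deriv

lemma deriv2_hs (x : ℝ) :
    deriv (deriv hs) x = -(Real.exp (x+1) + Real.exp (1-x)) / (Real.exp 1 ^ 2 - 1) := by
  rw [deriv_hs]
  have h1 : HasDerivAt (fun x : ℝ => Real.exp (x+1)) (Real.exp (x+1)) x := by
    simpa using ((hasDerivAt_id x).add_const 1).exp
  have h2 : HasDerivAt (fun x : ℝ => Real.exp (1-x)) (-Real.exp (1-x)) x := by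
    simpa using ((hasDerivAt_id x).const_sub 1).exp
  have : HasDerivAt (fun x => -(Real.exp (x+1) - Real.exp (1-x)) / (Real.exp 1 ^ 2 - 1))
      (-(Real.exp (x+1) + Real.exp (1-x)) / (Real.exp 1 ^ 2 - 1)) x := by
    have := ((h1.sub h2).neg.div_const (Real.exp 1 ^ 2 - 1))
    exact this.congr_deriv (by ring)
  exact this.deriv

@[continuity, fun_prop]
lemma continuous_hs : Continuous hs := by
  unfold hs; fun_prop

@[continuity, fun_prop]
lemma continuous_deriv_hs : Continuous (deriv hs) := by
  rw [deriv_hs]; fun_prop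

@[continuity, fun_prop]
lemma continuous_deriv2_hs : Continuous (deriv (deriv hs)) := by
  have : deriv (deriv hs) = fun x => -(Real.exp (x+1) + Real.exp (1-x)) / (Real.exp 1 ^ 2 - 1) :=
    funext deriv2_hs
  rw [this]; fun_prop

lemma hs_nonneg {x : ℝ} (hx : x ∈ Icc (-1:ℝ) 1) : 0 ≤ hs x := by
  have hE := Epos
  have hu1 : (1:ℝ) ≤ Real.exp (x+1) := by
    calc (1:ℝ) = Real.exp 0 := by simp
      _ ≤ _ := Real.exp_le_exp.2 (by linarith [hx.1])
  have hu2 : Real.exp (x+1) ≤ Real.exp 1 ^ 2 := by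
    rw [show Real.exp 1 ^ 2 = Real.exp 2 by rw [sq, ← Real.exp_add]; norm_num]
    exact Real.exp_le_exp.2 (by linarith [hx.2])
  have hm := hs_exp_mul x
  have hw : 0 < Real.exp (1-x) := Real.exp_pos _
  have hu : 0 < Real.exp (x+1) := Real.exp_pos _
  unfold hs
  rw [div_sub_div_same, le_div_iff₀ hE]
  nlinarith [mul_nonneg (sub_nonneg.2 hu1) (sub_nonneg.2 hu2)]

lemma hs_pos {x : ℝ} (hx : x ∈ Ioo (-1:ℝ) 1) : 0 < hs x := by
  have hE := Epos
  have hu1 : (1:ℝ) < Real.exp (x+1) := by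
    calc (1:ℝ) = Real.exp 0 := by simp
      _ < _ := Real.exp_lt_exp.2 (by linarith [hx.1])
  have hu2 : Real.exp (x+1) < Real.exp 1 ^ 2 := by
    rw [show Real.exp 1 ^ 2 = Real.exp 2 by rw [sq, ← Real.exp_add]; norm_num]
    exact Real.exp_lt_exp.2 (by linarith [hx.2])
  have hm := hs_exp_mul x
  have hu : 0 < Real.exp (x+1) := Real.exp_pos _
  unfold hs
  rw [div_sub_div_same, lt_div_iff₀ hE]
  nlinarith [mul_pos (sub_pos.2 hu1) (sub_pos.2 hu2)]

lemma hs_le_one (x : ℝ) : hs x ≤ 1 := by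
  have hE := Epos
  have hm := hs_exp_mul x
  have hu : 0 < Real.exp (x+1) := Real.exp_pos _
  have hw : 0 < Real.exp (1-x) := Real.exp_pos _
  have he : (2:ℝ) < Real.exp 1 ^ 2 - 1 := by nlinarith [Real.exp_one_gt_d9]
  unfold hs
  rw [div_sub_div_same, div_le_one hE]
  nlinarith [sq_nonneg (Real.exp (x+1) - Real.exp (1-x))]

lemma hs_sum_le {x : ℝ} (hx : x ∈ Icc (-1:ℝ) 1) :
    Real.exp (x+1) + Real.exp (1-x) ≤ Real.exp 1 ^ 2 + 1 := by
  have hE := Epos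
  have hu1 : (1:ℝ) ≤ Real.exp (x+1) := by
    calc (1:ℝ) = Real.exp 0 := by simp
      _ ≤ _ := Real.exp_le_exp.2 (by linarith [hx.1])
  have hu2 : Real.exp (x+1) ≤ Real.exp 1 ^ 2 := by
    rw [show Real.exp 1 ^ 2 = Real.exp 2 by rw [sq, ← Real.exp_add]; norm_num]
    exact Real.exp_le_exp.2 (by linarith [hx.2])
  have hm := hs_exp_mul x
  have hu : 0 < Real.exp (x+1) := Real.exp_pos _
  nlinarith [mul_nonneg (sub_nonneg.2 hu1) (sub_nonneg.2 hu2)]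

lemma W_ge {x : ℝ} (hx : x ∈ Icc (-1:ℝ) 1) :
    ((Real.exp 1 - 1)/(Real.exp 1 + 1))^2 ≤
      2*(deriv hs x)^2 - 4*hs x * (deriv (deriv hs) x) + hs x^2 := by
  have hE := Epos
  have hm := hs_exp_mul x
  have hsum := hs_sum_le hx
  have hu : 0 < Real.exp (x+1) := Real.exp_pos _
  have hw : 0 < Real.exp (1-x) := Real.exp_pos _
  set u := Real.exp (x+1) with hu'
  set w := Real.exp (1-x) with hw'
  set e := Real.exp 1 with he'
  have he1 : (2.7182818283:ℝ) < e := Real.exp_one_gt_d9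
  have he2 : e < 2.7182818286 := Real.exp_one_lt_d9
  have h2e : 2*e ≤ u + w := by nlinarith [sq_nonneg (u-w)]
  have hge : 0 ≤ e^2 + 1 - (u+w) := by linarith
  have hhs : hs x = (e^2+1-(u+w))/(e^2-1) := by unfold hs; rw [← hu', ← hw', ← he']; ring
  have goal_eq : 2*(deriv hs x)^2 - 4*hs x * (deriv (deriv hs) x) + hs x^2
      = (2*(u-w)^2 + 4*(e^2+1-(u+w))*(u+w) + (e^2+1-(u+w))^2)/(e^2-1)^2 := by
    have d1 : deriv hs x = -(u-w)/(e^2-1) := (hasDerivAt_hs x).deriv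
    have d2 : deriv (deriv hs) x = -(u+w)/(e^2-1) := deriv2_hs x
    rw [d1, d2, hhs]
    field_simp
    ring
  have delta_eq : ((e-1)/(e+1))^2 = (e-1)^4/(e^2-1)^2 := by
    have h1 : e + 1 ≠ 0 := by nlinarith
    have h2 : (e:ℝ)^2 - 1 ≠ 0 := by nlinarith
    field_simp
    ring
  rw [goal_eq, delta_eq, div_le_div_iff₀ (by positivity) (by positivity)]
  have h3 : 0 ≤ 3*(u+w) - (2*e^2+2-6*e) := by nlinarith
  nlinarith [mul_nonneg (sub_nonneg.2 h2e) h3, mul_nonneg hge (by positivity : (0:ℝ) ≤ u + w),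
    sq_nonneg (u-w)]

lemma theta_zero (θ : ℝ → ℝ) (hθ : Continuous θ)
    (hz : (∫ ξ in (-1:ℝ)..1, hs ξ * θ ξ) = 0) :
    ∃ x₀ ∈ Icc (-1:ℝ) 1, θ x₀ = 0 := by
  by_contra h
  push_neg at h
  have hint : IntervalIntegrable (fun ξ => hs ξ * θ ξ) volume (-1) 1 :=
    (continuous_hs.mul hθ).intervalIntegrable _ _
  have hsign : (∀ x ∈ Icc (-1:ℝ) 1, 0 < θ x) ∨ (∀ x ∈ Icc (-1:ℝ) 1, θ x < 0) := by
    by_contra hc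
    push_neg at hc
    obtain ⟨⟨a, ha, ha'⟩, ⟨b, hb, hb'⟩⟩ := hc
    have ha2 : θ a < 0 := lt_of_le_of_ne ha' (h a ha)
    have hb2 : 0 < θ b := lt_of_le_of_ne' hb' (h b hb)
    have hmem : (0:ℝ) ∈ uIcc (θ a) (θ b) := by
      rw [mem_uIcc]; left; exact ⟨ha2.le, hb2.le⟩
    obtain ⟨c, hc1, hc2⟩ := intermediate_value_uIcc (hθ.continuousOn) hmem
    have hc3 : c ∈ Icc (-1:ℝ) 1 := by
      have : uIcc a b ⊆ Icc (-1:ℝ) 1 := by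
        rw [show Icc (-1:ℝ) 1 = uIcc (-1) 1 from (uIcc_of_le (by norm_num)).symm]
        exact uIcc_subset_uIcc (by rwa [uIcc_of_le (by norm_num : (-1:ℝ) ≤ 1)])
          (by rwa [uIcc_of_le (by norm_num : (-1:ℝ) ≤ 1)])
      exact this hc1
    exact h c hc3 hc2
  rcases hsign with hpos | hneg
  · have : 0 < ∫ ξ in (-1:ℝ)..1, hs ξ * θ ξ :=
      intervalIntegral_pos_of_pos_on hint
        (fun x hx => mul_pos (hs_pos hx)
          (hpos x ⟨hx.1.le, hx.2.le⟩)) (by norm_num)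
    linarith [this.trans_eq hz]
  · have : 0 < ∫ ξ in (-1:ℝ)..1, -(hs ξ * θ ξ) :=
      intervalIntegral_pos_of_pos_on hint.neg
        (fun x hx => by
          have := mul_pos (hs_pos hx) (neg_pos.2 (hneg x ⟨hx.1.le, hx.2.le⟩))
          simpa using this) (by norm_num)
    rw [intervalIntegral.integral_neg, hz] at this
    simp at this

lemma poincare (θ : ℝ → ℝ) (hθ : ContDiff ℝ (⊤ : ℕ∞) θ)
    (hz : (∫ ξ in (-1:ℝ)..1, hs ξ * θ ξ) = 0) {x : ℝ} (hx : x ∈ Icc (-1:ℝ) 1) :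
    θ x ^ 2 ≤ 2 * ∫ ξ in (-1:ℝ)..1, (deriv θ ξ)^2 := by
  have hd : Differentiable ℝ θ := hθ.differentiable (by simp)
  have hdc : Continuous (deriv θ) := hθ.continuous_deriv (by simp)
  obtain ⟨x₀, hx₀, hθ0⟩ := theta_zero θ hθ.continuous hz
  set I := ∫ ξ in (-1:ℝ)..1, (deriv θ ξ)^2 with hI'
  have hI : 0 ≤ I := intervalIntegral.integral_nonneg (by norm_num)
    (fun y _ => sq_nonneg _)
  have habs : ∀ ε : ℝ, 0 < ε → |θ x| ≤ ε + I/(2*ε) := by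
    intro ε hε
    have step1 : |θ x| ≤ ∫ ξ in (-1:ℝ)..1, |deriv θ ξ| := by
      have hstep : ∀ a b : ℝ, a ∈ Icc (-1:ℝ) 1 → b ∈ Icc (-1:ℝ) 1 → a ≤ b →
          |θ b - θ a| ≤ ∫ ξ in (-1:ℝ)..1, |deriv θ ξ| := by
        intro a b ha hb hab
        have ftc : (∫ ξ in a..b, deriv θ ξ) = θ b - θ a :=
          intervalIntegral.integral_deriv_eq_sub (fun y _ => hd y)
            (hdc.intervalIntegrable _ _)
        rw [← ftc]
        calc |∫ ξ in a..b, deriv θ ξ| ≤ ∫ ξ in a..b, |deriv θ ξ| :=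
              intervalIntegral.abs_integral_le_integral_abs hab
          _ ≤ ∫ ξ in (-1:ℝ)..1, |deriv θ ξ| :=
              intervalIntegral.integral_mono_interval ha.1 hab hb.2
                (Filter.Eventually.of_forall (fun y => abs_nonneg _))
                (hdc.abs.intervalIntegrable _ _)
      rcases le_total x₀ x with hle | hle
      · have := hstep x₀ x hx₀ hx hle
        rwa [hθ0, sub_zero] at this
      · have := hstep x x₀ hx hx₀ hle
        rwa [hθ0, zero_sub, abs_neg] at this
    have step2 : (∫ ξ in (-1:ℝ)..1, |deriv θ ξ|) ≤ ε + I/(2*ε) := by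
      have hmono : (∫ ξ in (-1:ℝ)..1, |deriv θ ξ|)
          ≤ ∫ ξ in (-1:ℝ)..1, (ε/2 + (deriv θ ξ)^2/(2*ε)) := by
        apply intervalIntegral.integral_mono_on (by norm_num)
          (hdc.abs.intervalIntegrable _ _)
          (by apply Continuous.intervalIntegrable; fun_prop)
        intro y _
        have h1 : 0 ≤ (|deriv θ y| - ε)^2 := sq_nonneg _
        have h2 : |deriv θ y|^2 = (deriv θ y)^2 := sq_abs _
        rw [div_add_div _ _ (by norm_num) (by positivity), le_div_iff₀ (by positivity)]
        nlinarith
      have hcalc : (∫ ξ in (-1:ℝ)..1, (ε/2 + (deriv θ ξ)^2/(2*ε))) = ε + I/(2*ε) := by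
        rw [intervalIntegral.integral_add (intervalIntegrable_const)
          (by apply Continuous.intervalIntegrable; fun_prop)]
        rw [intervalIntegral.integral_const]
        have : (∫ ξ in (-1:ℝ)..1, (deriv θ ξ)^2/(2*ε))
            = (∫ ξ in (-1:ℝ)..1, (deriv θ ξ)^2)/(2*ε) :=
          intervalIntegral.integral_div _ _
        rw [this, ← hI']
        simp [smul_eq_mul]
        ring
      exact hmono.trans_eq hcalc
    exact step1.trans step2
  rcases eq_or_lt_of_le hI with hI0 | hI0
  · have hzero : θ x = 0 := by
      by_contra hne
      have h0 : 0 < |θ x| := abs_pos.2 hne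
      have := habs (|θ x|/2) (by positivity)
      rw [← hI0] at this
      simp at this
      linarith
    rw [hzero]
    simpa using hI
  · set ε := Real.sqrt (I/2) with hε'
    have hεpos : 0 < ε := Real.sqrt_pos.2 (by linarith)
    have hε2 : ε^2 = I/2 := Real.sq_sqrt (by linarith)
    have hb := habs ε hεpos
    have hq : I/(2*ε) * (2*ε) = I := div_mul_cancel₀ _ (by positivity)
    have hq2 : (I/(2*ε))^2 = I/2 := by
      rw [div_pow, mul_pow, hε2]
      field_simp
    have ht2 : θ x ^ 2 ≤ (ε + I/(2*ε))^2 := by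
      have h1 : θ x ^2 = |θ x|^2 := (sq_abs _).symm
      rw [h1]
      apply pow_le_pow_left₀ (abs_nonneg _) hb
    calc θ x ^2 ≤ (ε + I/(2*ε))^2 := ht2
      _ = ε^2 + I/(2*ε)*(2*ε) + (I/(2*ε))^2 := by ring
      _ = 2*I := by rw [hε2, hq, hq2]; ring

theorem stmt_19 :
    ∃ c₁ > (0 : ℝ), ∃ c > (0 : ℝ), ∀ θ v : ℝ → ℝ,
      ContDiff ℝ (⊤ : ℕ∞) θ → ContDiff ℝ (⊤ : ℕ∞) v →
      (∫ ξ in (-1 : ℝ)..1, hs ξ * v ξ) = 0 →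
      (∫ ξ in (-1 : ℝ)..1, hs ξ * θ ξ) = 0 →
      (1 / 2) * (∫ ξ in (-1 : ℝ)..1, hs ξ * (v ξ) ^ 2) +
        (∫ ξ in (-1 : ℝ)..1,
          (2 * (deriv hs ξ) ^ 2 - 4 * hs ξ * deriv (deriv hs) ξ + hs ξ ^ 2) *
            (deriv θ ξ) ^ 2) +
        (∫ ξ in (-1 : ℝ)..1, hs ξ ^ 2 * (deriv (deriv θ) ξ) ^ 2) +
        c₁ * (∫ ξ in (-1 : ℝ)..1, hs ξ * (deriv θ ξ) ^ 2) +
        c₁ * (∫ ξ in (-1 : ℝ)..1, hs ξ * v ξ * θ ξ) ≥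
      c * ((∫ ξ in (-1 : ℝ)..1, hs ξ * (v ξ) ^ 2) +
           (∫ ξ in (-1 : ℝ)..1, (deriv θ ξ) ^ 2) +
           (∫ ξ in (-1 : ℝ)..1, (hs ξ) ^ 2 * (deriv (deriv θ) ξ) ^ 2) +
           ∫ ξ in (-1 : ℝ)..1, hs ξ * (deriv θ ξ) ^ 2) := by
  have he1 : (2.7182818283:ℝ) < Real.exp 1 := Real.exp_one_gt_d9
  set δ : ℝ := ((Real.exp 1 - 1)/(Real.exp 1 + 1))^2 with hδ'
  have hδpos : 0 < δ := pow_pos (div_pos (by linarith) (by linarith)) 2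
  have hδ1 : δ ≤ 1 := by
    rw [hδ']
    have h1 : (Real.exp 1 - 1)/(Real.exp 1 + 1) ≤ 1 := by
      rw [div_le_one (by linarith)]; linarith
    have h0 : (0:ℝ) ≤ (Real.exp 1 - 1)/(Real.exp 1 + 1) :=
      (div_pos (by linarith) (by linarith)).le
    nlinarith
  refine ⟨δ/8, by linarith, δ/8, by linarith, ?_⟩
  intro θ v hθ hv hvz hθz
  have Cθ : Continuous θ := hθ.continuous
  have Cv : Continuous v := hv.continuous
  have Cdθ : Continuous (deriv θ) := hθ.continuous_deriv (by simp)
  have Cddθ : Continuous (deriv (deriv θ)) := by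
    have h2 : ContDiff ℝ (⊤:ℕ∞) (deriv^[2] θ) := (hθ.of_le (by simp)).iterate_deriv 2
    simpa [Function.iterate_succ, Function.comp] using h2.continuous
  set Iv := ∫ ξ in (-1:ℝ)..1, hs ξ * (v ξ)^2 with hIv'
  set Id := ∫ ξ in (-1:ℝ)..1, (deriv θ ξ)^2 with hId'
  set I2 := ∫ ξ in (-1:ℝ)..1, hs ξ^2 * (deriv (deriv θ) ξ)^2 with hI2'
  set I1 := ∫ ξ in (-1:ℝ)..1, hs ξ * (deriv θ ξ)^2 with hI1'
  set Ic := ∫ ξ in (-1:ℝ)..1, hs ξ * v ξ * θ ξ with hIc'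
  set IW := ∫ ξ in (-1:ℝ)..1,
      (2 * (deriv hs ξ) ^ 2 - 4 * hs ξ * deriv (deriv hs) ξ + hs ξ ^ 2) *
        (deriv θ ξ) ^ 2 with hIW'
  set It := ∫ ξ in (-1:ℝ)..1, hs ξ * (θ ξ)^2 with hIt'
  -- nonnegativity
  have hIv0 : 0 ≤ Iv := intervalIntegral.integral_nonneg (by norm_num)
    (fun x hx => mul_nonneg (hs_nonneg hx) (sq_nonneg _))
  have hId0 : 0 ≤ Id := intervalIntegral.integral_nonneg (by norm_num)
    (fun x hx => sq_nonneg _)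
  have hI20 : 0 ≤ I2 := intervalIntegral.integral_nonneg (by norm_num)
    (fun x hx => mul_nonneg (sq_nonneg _) (sq_nonneg _))
  have hI10 : 0 ≤ I1 := intervalIntegral.integral_nonneg (by norm_num)
    (fun x hx => mul_nonneg (hs_nonneg hx) (sq_nonneg _))
  -- weight bound
  have hIW : δ * Id ≤ IW := by
    have h1 : δ * Id = ∫ ξ in (-1:ℝ)..1, δ * (deriv θ ξ)^2 := by
      rw [intervalIntegral.integral_const_mul]
    rw [h1, hIW']
    apply intervalIntegral.integral_mono_on (by norm_num)
      (by apply Continuous.intervalIntegrable; fun_prop)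
      (by apply Continuous.intervalIntegrable; fun_prop)
    intro x hx
    exact mul_le_mul_of_nonneg_right (W_ge hx) (sq_nonneg _)
  -- cross term bound
  have hexp : (∫ ξ in (-1:ℝ)..1, hs ξ * (v ξ + θ ξ)^2) = Iv + 2*Ic + It := by
    have heq : (∫ ξ in (-1:ℝ)..1, hs ξ * (v ξ + θ ξ)^2)
        = ∫ ξ in (-1:ℝ)..1, (hs ξ * (v ξ)^2 + (2*(hs ξ * v ξ * θ ξ) + hs ξ * (θ ξ)^2)) :=
      intervalIntegral.integral_congr (fun ξ _ => by ring)
    rw [heq, intervalIntegral.integral_add (by apply Continuous.intervalIntegrable; fun_prop)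
      (by apply Continuous.intervalIntegrable; fun_prop),
      intervalIntegral.integral_add (by apply Continuous.intervalIntegrable; fun_prop)
      (by apply Continuous.intervalIntegrable; fun_prop),
      intervalIntegral.integral_const_mul]
    simp only [hIv', hIc', hIt']
    ring
  have hJ : 0 ≤ Iv + 2*Ic + It := by
    rw [← hexp]
    exact intervalIntegral.integral_nonneg (by norm_num)
      (fun x hx => mul_nonneg (hs_nonneg hx) (sq_nonneg _))
  -- Poincaré bound
  have hItUB : It ≤ 4*Id := by
    have h1 : It ≤ ∫ _ in (-1:ℝ)..1, 2*Id := by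
      rw [hIt']
      apply intervalIntegral.integral_mono_on (by norm_num)
        (by apply Continuous.intervalIntegrable; fun_prop)
        intervalIntegrable_const
      intro x hx
      calc hs x * (θ x)^2 ≤ 1 * (2*Id) :=
            mul_le_mul (hs_le_one x) (poincare θ hθ hθz hx) (sq_nonneg _) zero_le_one
        _ = 2*Id := one_mul _
    have h2 : (∫ _ in (-1:ℝ)..1, 2*Id) = 4*Id := by
      rw [intervalIntegral.integral_const, smul_eq_mul]
      ring
    linarith [h1.trans_eq h2]
  -- assemble
  have h1 : δ/8 * (-(Iv+It)/2) ≤ δ/8 * Ic :=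
    mul_le_mul_of_nonneg_left (by linarith) (by linarith)
  have h2 : δ/8 * It ≤ δ/8 * (4*Id) :=
    mul_le_mul_of_nonneg_left hItUB (by linarith)
  nlinarith [hIW, h1, h2, mul_nonneg (by linarith : (0:ℝ) ≤ 8 - 3*δ) hIv0,
    mul_nonneg hδpos.le hId0, mul_nonneg (by linarith : (0:ℝ) ≤ 8 - δ) hI20,
    mul_nonneg hδpos.le hI10]
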